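/- Let N be a positive integer, α₀,…,α_N positive reals, 0 ≤ ξ ≤ min over n of αₙ, σ² > 0, and p ≥ 0. Define γ_w(p, x) = (p/σ²)·(α₀ + Σₙ xₙ·αₙ − ξ·√(1 + Σₙ xₙ))² for x ∈ {0,1}^N. Then γ_w is monotone nondecreasing in x: if x ≤ x' componentwise, then γ_w(p, x) ≤ γ_w(p, x'). -/
import Mathlib


/-- The worst-case SNR γ_w(p, x) = (p/σ²)(α₀ + Σ xₙαₙ − ξ√(1 + Σ xₙ))² is
componentwise nondecreasing in the binary vector x. -/
theorem stmt_8 (N : ℕ) (hN : 0 < N) (α : Fin (N + 1) → ℝ) (hα : ∀ n, 0 < α n)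
    (ξ : ℝ) (hξ0 : 0 ≤ ξ) (hξ : ∀ n, ξ ≤ α n) (σ2 : ℝ) (hσ : 0 < σ2)
    (p : ℝ) (hp : 0 ≤ p)
    (x x' : Fin N → ℝ) (hx : ∀ n, x n = 0 ∨ x n = 1) (hx' : ∀ n, x' n = 0 ∨ x' n = 1)
    (hle : ∀ n, x n ≤ x' n) :
    p / σ2 * (α 0 + ∑ n : Fin N, x n * α n.succ - ξ * Real.sqrt (1 + ∑ n, x n)) ^ 2 ≤
      p / σ2 * (α 0 + ∑ n : Fin N, x' n * α n.succ - ξ * Real.sqrt (1 + ∑ n, x' n)) ^ 2 := by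
  set S := ∑ n, x n with hS
  set S' := ∑ n, x' n with hS'
  have hx0 : ∀ n, 0 ≤ x n := fun n => by rcases hx n with h | h <;> simp [h]
  have hS0 : (0:ℝ) ≤ S := Finset.sum_nonneg fun n _ => hx0 n
  have hSS : S ≤ S' := Finset.sum_le_sum fun n _ => hle n
  have hS'0 : (0:ℝ) ≤ S' := le_trans hS0 hSS
  have hsq : Real.sqrt (1 + S) ^ 2 = 1 + S := Real.sq_sqrt (by linarith)
  have hsq' : Real.sqrt (1 + S') ^ 2 = 1 + S' := Real.sq_sqrt (by linarith)
  have h1 : (1:ℝ) ≤ Real.sqrt (1 + S) := by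
    nlinarith [Real.sqrt_nonneg (1 + S)]
  have h1' : (1:ℝ) ≤ Real.sqrt (1 + S') := by
    nlinarith [Real.sqrt_nonneg (1 + S')]
  -- sqrt(1+S') - sqrt(1+S) ≤ S' - S
  have hsqrt_diff : Real.sqrt (1 + S') - Real.sqrt (1 + S) ≤ S' - S := by
    have hle2 : Real.sqrt (1 + S') ≤ Real.sqrt (1 + S) + (S' - S) := by
      have h2 : 1 + S' ≤ (Real.sqrt (1 + S) + (S' - S)) ^ 2 := by nlinarith
      calc Real.sqrt (1 + S') ≤ Real.sqrt ((Real.sqrt (1 + S) + (S' - S)) ^ 2) :=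
            Real.sqrt_le_sqrt h2
        _ = Real.sqrt (1 + S) + (S' - S) := by
            rw [Real.sqrt_sq (by nlinarith)]
    linarith
  -- sqrt t ≤ t for t ≥ 1
  have hsqrt_le : Real.sqrt (1 + S) ≤ 1 + S := by nlinarith
  -- ξ (S' - S) ≤ Σ (x'-x) α
  have hξsum : ξ * (S' - S) ≤ (∑ n : Fin N, x' n * α n.succ) - ∑ n : Fin N, x n * α n.succ := by
    rw [hS, hS', ← Finset.sum_sub_distrib, Finset.mul_sum, ← Finset.sum_sub_distrib]
    exact Finset.sum_le_sum fun n _ => by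
      have := hξ n.succ
      have := hle n
      nlinarith [hα n.succ]
  -- ξ (1 + S) ≤ α 0 + Σ x α
  have hξS : ξ * (1 + S) ≤ α 0 + ∑ n : Fin N, x n * α n.succ := by
    have h : ξ * S ≤ ∑ n : Fin N, x n * α n.succ := by
      rw [hS, Finset.mul_sum]
      exact Finset.sum_le_sum fun n _ => by
        have := hξ n.succ; have := hx0 n; nlinarith
    have := hξ 0
    nlinarith
  have hA0 : 0 ≤ α 0 + ∑ n : Fin N, x n * α n.succ - ξ * Real.sqrt (1 + S) := by
    have : ξ * Real.sqrt (1 + S) ≤ ξ * (1 + S) :=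
      mul_le_mul_of_nonneg_left hsqrt_le hξ0
    linarith
  have hAB : α 0 + ∑ n : Fin N, x n * α n.succ - ξ * Real.sqrt (1 + S) ≤
      α 0 + ∑ n : Fin N, x' n * α n.succ - ξ * Real.sqrt (1 + S') := by
    have : ξ * (Real.sqrt (1 + S') - Real.sqrt (1 + S)) ≤ ξ * (S' - S) :=
      mul_le_mul_of_nonneg_left hsqrt_diff hξ0
    nlinarith
  exact mul_le_mul_of_nonneg_left (pow_le_pow_left₀ hA0 hAB 2) (div_nonneg hp hσ.le)
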